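/- arXiv:2409.01983 — 5 statements merged into one kernel-verified Lean document; each statement's English description precedes it below -/
import Mathlib

section
/- Let (Ω, ℱ, P) be a probability space carrying a treatment variable A (with levels 0 and a, each occurring with positive probability) and nonnegative potential outcomes T^0, T^a, assume no confounding (A independent of (T^0, T^a)) and consistency (T = T^a on {A = a}, T = T^0 on {A = 0}). Then for every t > 0, (1/t)·sup{s ∈ [0,∞) : P(T > s | A = 0) ≥ P(T > t | A = a)} = (1/t)·sup{s ∈ [0,∞) : P(T^0 > s) ≥ P(T^a > t)}; that is, the observed acceleration factor θ_m(t) equals the causal acceleration factor θ(t). -/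
/-!
On `{A = a}` consistency replaces `T` by `Tᵃ`, and independence of `A` and `Tᵃ` removes the
conditioning, so `S_{T|A=a} = S_{Tᵃ}`; likewise `S_{T|A=0} = S_{T⁰}`. The two sets whose suprema
define `θ_m(t)` and `θ(t)` are therefore literally equal.
-/

open MeasureTheory ProbabilityTheory Set

section

variable {Ω β γ : Type*} [MeasurableSpace Ω] {μ : Measure Ω}

lemma cond_preimage_congr {f g : Ω → β} {s : Set Ω} (hs : MeasurableSet s)
    (hfg : ∀ ω ∈ s, f ω = g ω) (u : Set β) :
    μ[|s] (f ⁻¹' u) = μ[|s] (g ⁻¹' u) := by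
  have hinter : s ∩ f ⁻¹' u = s ∩ g ⁻¹' u := by
    ext ω
    simp only [mem_inter_iff, mem_preimage]
    exact and_congr_right fun hω => by rw [hfg ω hω]
  rw [cond_apply hs, cond_apply hs, hinter]

lemma ProbabilityTheory.IndepFun.cond_preimage [MeasurableSpace β] [MeasurableSpace γ] [IsFiniteMeasure μ]
    {X : Ω → β} {Y : Ω → γ} (hXY : X ⟂ᵢ[μ] Y) (hX : Measurable X)
    {s : Set β} {t : Set γ} (hs : MeasurableSet s) (ht : MeasurableSet t)
    (hXs : μ (X ⁻¹' s) ≠ 0) :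
    μ[|X ⁻¹' s] (Y ⁻¹' t) = μ (Y ⁻¹' t) := by
  rw [cond_apply (hX hs), hXY.measure_inter_preimage_eq_mul s t hs ht, ← mul_assoc,
    ENNReal.inv_mul_cancel hXs (measure_ne_top μ _), one_mul]

lemma cond_survival_eq_of_indepFun [IsFiniteMeasure μ] {A T Y : Ω → ℝ} {a : ℝ}
    (hA : Measurable A) (hAY : A ⟂ᵢ[μ] Y) (hcons : ∀ ω, A ω = a → T ω = Y ω)
    (ha : 0 < μ {ω | A ω = a}) (t : ℝ) :
    μ[|{ω | A ω = a}] {ω | t < T ω} = μ {ω | t < Y ω} :=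
  calc μ[|A ⁻¹' {a}] (T ⁻¹' Ioi t)
      = μ[|A ⁻¹' {a}] (Y ⁻¹' Ioi t) :=
        cond_preimage_congr (hA (measurableSet_singleton a)) hcons _
    _ = μ (Y ⁻¹' Ioi t) :=
        hAY.cond_preimage hA (measurableSet_singleton a) measurableSet_Ioi ha.ne'

end

theorem observed_equals_causal_acceleration_factor_general
    {Ω : Type*} [MeasurableSpace Ω] (P : Measure Ω) [IsProbabilityMeasure P]
    (A T T0 Ta : Ω → ℝ) (a : ℝ)
    (hA : Measurable A)
    (hindep : IndepFun A (fun ω => (T0 ω, Ta ω)) P)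
    (hconsa : ∀ ω, A ω = a → T ω = Ta ω)
    (hcons0 : ∀ ω, A ω = 0 → T ω = T0 ω)
    (hpa : 0 < P {ω | A ω = a}) (hp0 : 0 < P {ω | A ω = 0}) :
    ∀ t : ℝ, 0 < t →
      (1 / t) * sSup {s : ℝ | 0 ≤ s ∧
          (P[|{ω | A ω = a}]) {ω | t < T ω} ≤ (P[|{ω | A ω = 0}]) {ω | s < T ω}}
        = (1 / t) * sSup {s : ℝ | 0 ≤ s ∧ P {ω | t < Ta ω} ≤ P {ω | s < T0 ω}} := by
  have hA0 : A ⟂ᵢ[P] T0 := hindep.comp measurable_id measurable_fst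
  have hAa : A ⟂ᵢ[P] Ta := hindep.comp measurable_id measurable_snd
  intro t _
  simp only [cond_survival_eq_of_indepFun hA hAa hconsa hpa,
    cond_survival_eq_of_indepFun hA hA0 hcons0 hp0]

/-- Theorem 1 of the paper: under no confounding, consistency, and positivity, the observed
acceleration factor `θ_m(t) = (1/t)·S_{T|A=0}⁻¹(S_{T|A=a}(t))` equals the causal acceleration
factor `θ(t) = (1/t)·S_{T⁰}⁻¹(S_{Tᵃ}(t))` for every `t > 0`, where the generalized inverse of a
survival function `S` is `S⁻¹(p) = sup {s ∈ [0,∞) : S(s) ≥ p}`. -/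
theorem observed_equals_causal_acceleration_factor
    {Ω : Type*} [MeasurableSpace Ω] (P : Measure Ω) [IsProbabilityMeasure P]
    (A T T0 Ta : Ω → ℝ) (a : ℝ)
    (hA : Measurable A) (hT : Measurable T) (hT0 : Measurable T0) (hTa : Measurable Ta)
    (hT0nn : ∀ ω, 0 ≤ T0 ω) (hTann : ∀ ω, 0 ≤ Ta ω)
    (hindep : IndepFun A (fun ω => (T0 ω, Ta ω)) P)
    (hconsa : ∀ ω, A ω = a → T ω = Ta ω)
    (hcons0 : ∀ ω, A ω = 0 → T ω = T0 ω)
    (hpa : 0 < P {ω | A ω = a}) (hp0 : 0 < P {ω | A ω = 0}) :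
    ∀ t : ℝ, 0 < t →
      (1 / t) * sSup {s : ℝ | 0 ≤ s ∧
          (P[|{ω | A ω = a}]) {ω | t < T ω} ≤ (P[|{ω | A ω = 0}]) {ω | s < T ω}}
        = (1 / t) * sSup {s : ℝ | 0 ≤ s ∧ P {ω | t < Ta ω} ≤ P {ω | s < T0 ω}} :=
  observed_equals_causal_acceleration_factor_general P A T T0 Ta a hA hindep hconsa hcons0 hpa hp0
end

section
/- Let T^0 be a strictly positive random variable whose survival function S_{T^0}(t) = P(T^0 > t) is continuous and strictly decreasing with S_{T^0}(0) = 1, S_{T^0}(t) > 0 for all t, and S_{T^0}(t) → 0 as t → ∞. Let g : [0,∞) → (0,∞) be locally integrable with Φ(t) := ∫_0^t g(s) ds → ∞, and define T^a := inf{t > 0 : Φ(t) ≥ T^0}. Then for every t > 0, (1/t)·sup{s ∈ [0,∞) : S_{T^0}(s) ≥ P(T^a > t)} = Φ(t)/t = (1/t)·∫_0^t g(s) ds. -/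
open MeasureTheory ProbabilityTheory Filter Set

/-!
Since `g > 0`, the cumulative rate `Φ` is a strictly increasing continuous bijection of `[0, ∞)`
onto itself, so the hitting time `Tᵃ = Φ⁻¹(T⁰)` satisfies `Tᵃ > t ↔ T⁰ > Φ(t)`. Hence
`S_{Tᵃ}(t) = S_{T⁰}(Φ(t))`, and inverting the strictly decreasing `S_{T⁰}` returns `Φ(t)`,
whatever the law of `T⁰`.
-/

theorem MeasureTheory.LocallyIntegrable.intervalIntegrable {E : Type*} [NormedAddCommGroup E]
    {f : ℝ → E} {μ : Measure ℝ} (hf : LocallyIntegrable f μ) (a b : ℝ) :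
    IntervalIntegrable f μ a b :=
  (hf.integrableOn_isCompact isCompact_uIcc).intervalIntegrable

theorem strictMonoOn_primitive_of_pos {g : ℝ → ℝ} (hg : LocallyIntegrable g) {c : ℝ}
    (hpos : ∀ x, c ≤ x → 0 < g x) (a : ℝ) :
    StrictMonoOn (fun t => ∫ s in a..t, g s) (Ici c) := by
  intro u hu v _ huv
  have hgap : 0 < ∫ s in u..v, g s :=
    intervalIntegral.intervalIntegral_pos_of_pos_on (hg.intervalIntegrable u v)
      (fun x hx => hpos x (le_trans hu hx.1.le)) huv
  dsimp only
  rw [← intervalIntegral.integral_add_adjacent_intervals (hg.intervalIntegrable a u)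
    (hg.intervalIntegrable u v)]
  linarith

section HittingTime

variable {Φ : ℝ → ℝ} (hcont : ContinuousOn Φ (Ici 0)) (hmono : StrictMonoOn Φ (Ici 0))
  (htop : Tendsto Φ atTop atTop)
include hcont hmono htop

theorem exists_setOf_pos_le_eq_Ici {y : ℝ} (hy : Φ 0 < y) :
    ∃ c, 0 < c ∧ Φ c = y ∧ {s | 0 < s ∧ y ≤ Φ s} = Ici c := by
  obtain ⟨M, hyM, hM⟩ := ((htop.eventually_ge_atTop y).and (eventually_ge_atTop 0)).exists
  obtain ⟨c, hc, hΦc⟩ := intermediate_value_Icc hM (hcont.mono Icc_subset_Ici_self)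
    (⟨hy.le, hyM⟩ : y ∈ Icc (Φ 0) (Φ M))
  have hc0 : 0 < c := hc.1.lt_of_ne (by rintro rfl; exact hy.ne hΦc)
  refine ⟨c, hc0, hΦc, ?_⟩
  ext s
  simp only [mem_ofPred_eq, mem_Ici, ← hΦc]
  constructor
  · rintro ⟨hs, hcs⟩
    exact (hmono.le_iff_le hc0.le hs.le).mp hcs
  · intro hcs
    exact ⟨hc0.trans_le hcs, (hmono.le_iff_le hc0.le (hc0.le.trans hcs)).mpr hcs⟩

theorem lt_sInf_setOf_pos_le_iff {y t : ℝ} (hy : Φ 0 < y) (ht : 0 ≤ t) :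
    t < sInf {s | 0 < s ∧ y ≤ Φ s} ↔ Φ t < y := by
  obtain ⟨c, hc, hΦc, hset⟩ := exists_setOf_pos_le_eq_Ici hcont hmono htop hy
  rw [hset, csInf_Ici, ← hΦc, hmono.lt_iff_lt ht hc.le]

end HittingTime

theorem StrictAntiOn.sSup_setOf_le_eq {α β : Type*} [ConditionallyCompleteLinearOrder α]
    [Preorder β] {S : α → β} {a x : α} (hS : StrictAntiOn S (Ici a)) (hx : a ≤ x) :
    sSup {s | a ≤ s ∧ S x ≤ S s} = x := by
  have hset : {s | a ≤ s ∧ S x ≤ S s} = Icc a x := by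
    ext s
    simp only [mem_ofPred_eq, mem_Icc]
    exact and_congr_right fun hs => hS.le_iff_ge hx hs
  rw [hset, csSup_Icc hx]

theorem conditional_acceleration_factor_general
    {Ω : Type*} [MeasurableSpace Ω] (P : Measure Ω)
    (T0 : Ω → ℝ) (hT0pos : ∀ ω, 0 < T0 ω)
    (S0 : ℝ → ℝ) (hS0 : ∀ t, S0 t = (P {ω | t < T0 ω}).toReal)
    (hanti : StrictAntiOn S0 (Ici 0))
    (g : ℝ → ℝ)
    (hgloc : LocallyIntegrable g)
    (hgpos : ∀ s, 0 ≤ s → 0 < g s)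
    (Φ : ℝ → ℝ) (hΦ : ∀ t, Φ t = ∫ s in (0 : ℝ)..t, g s)
    (hΦtop : Tendsto Φ atTop atTop)
    (Ta : Ω → ℝ) (hTa : ∀ ω, Ta ω = sInf {s : ℝ | 0 < s ∧ T0 ω ≤ Φ s}) :
    ∀ t : ℝ, 0 < t →
      (1 / t) * sSup {s : ℝ | 0 ≤ s ∧ (P {ω | t < Ta ω}).toReal ≤ S0 s} = Φ t / t ∧
      Φ t / t = (1 / t) * ∫ s in (0 : ℝ)..t, g s := by
  intro t ht
  have hΦprim : Φ = fun t => ∫ s in (0 : ℝ)..t, g s := funext hΦ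
  have hmono : StrictMonoOn Φ (Ici 0) := hΦprim ▸ strictMonoOn_primitive_of_pos hgloc hgpos 0
  have hcont : ContinuousOn Φ (Ici 0) :=
    hΦprim ▸ (intervalIntegral.continuous_primitive hgloc.intervalIntegrable 0).continuousOn
  have hΦ0 : Φ 0 = 0 := by rw [hΦ, intervalIntegral.integral_same]
  have hsurvival : (P {ω | t < Ta ω}).toReal = S0 (Φ t) := by
    rw [hS0]
    congr 2
    ext ω
    rw [mem_ofPred_eq, hTa]
    exact lt_sInf_setOf_pos_le_iff hcont hmono hΦtop (hΦ0.trans_lt (hT0pos ω)) ht.le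
  have hΦt : 0 ≤ Φ t := hΦ0 ▸ hmono.monotoneOn self_mem_Ici ht.le ht.le
  rw [hsurvival, hanti.sSup_setOf_le_eq hΦt, ← hΦ, one_div_mul_eq_div]
  exact ⟨rfl, rfl⟩

/-- Equations (3)–(4) of the paper: for `Tᵃ := inf {s > 0 : Φ(s) ≥ T⁰}` with
`Φ(t) = ∫_0^t g(s) ds`, the conditional causal acceleration factor
`θ_c(t) = (1/t)·S_{T⁰}⁻¹(S_{Tᵃ}(t))` equals `Φ(t)/t = (1/t)∫_0^t g(s) ds`, and in particular
does not depend on the baseline (frailty) distribution of `T⁰`. -/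
theorem conditional_acceleration_factor
    {Ω : Type*} [MeasurableSpace Ω] (P : Measure Ω) [IsProbabilityMeasure P]
    (T0 : Ω → ℝ) (hT0 : Measurable T0) (hT0pos : ∀ ω, 0 < T0 ω)
    (S0 : ℝ → ℝ) (hS0 : ∀ t, S0 t = (P {ω | t < T0 ω}).toReal)
    (hcont : ContinuousOn S0 (Ici 0)) (hanti : StrictAntiOn S0 (Ici 0))
    (hS00 : S0 0 = 1) (hpos : ∀ t, 0 ≤ t → 0 < S0 t)
    (hlim : Tendsto S0 atTop (nhds 0))
    (g : ℝ → ℝ) (hg : Measurable g)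
    (hgloc : LocallyIntegrable g)
    (hgpos : ∀ s, 0 ≤ s → 0 < g s)
    (Φ : ℝ → ℝ) (hΦ : ∀ t, Φ t = ∫ s in (0 : ℝ)..t, g s)
    (hΦtop : Tendsto Φ atTop atTop)
    (Ta : Ω → ℝ) (hTa : ∀ ω, Ta ω = sInf {s : ℝ | 0 < s ∧ T0 ω ≤ Φ s}) :
    ∀ t : ℝ, 0 < t →
      (1 / t) * sSup {s : ℝ | 0 ≤ s ∧ (P {ω | t < Ta ω}).toReal ≤ S0 s} = Φ t / t ∧
      Φ t / t = (1 / t) * ∫ s in (0 : ℝ)..t, g s :=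
  conditional_acceleration_factor_general P T0 hT0pos S0 hS0 hanti g hgloc hgpos Φ hΦ hΦtop Ta hTa
end

section
/- Let U_0 and U_1 be independent random variables each taking values in a countable set, and let T^0, T^a be nonnegative random variables. Fix t > 0 and a real c > 0 (the conditional causal acceleration factor at level u_1 of U_1 and time t). Suppose that for every u_0 with P(U_0 = u_0, U_1 = u_1) > 0: (i) P(T^a > t | U_0 = u_0, U_1 = u_1) = P(T^0 > c·t | U_0 = u_0), and (ii) P(T^0 > s | U_0 = u_0, U_1 = u_1) = P(T^0 > s | U_0 = u_0) for all s ≥ 0. Then P(T^a > t | U_1 = u_1) = P(T^0 > c·t). -/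
open MeasureTheory ProbabilityTheory Filter Set

/-! By the law of total probability over the fibres of `U₀`, `P(Tᵃ > t | U₁ = u₁)` is the
`P(U₀ = u₀ | U₁ = u₁)`-weighted sum of `P(Tᵃ > t | U₀ = u₀, U₁ = u₁) = P(T⁰ > c t | U₀ = u₀)`.
Independence turns the weights into `P(U₀ = u₀)`, and the law of total probability, read
backwards, collapses the sum to `P(T⁰ > c t)`. -/

namespace ProbabilityTheory

variable {Ω α : Type*} [MeasurableSpace Ω] [MeasurableSpace α] {μ : Measure Ω}

lemma sum_meas_smul_cond_fiber_of_countable [Countable α] [MeasurableSingletonClass α]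
    {X : Ω → α} (hX : Measurable X) (μ : Measure Ω) [IsFiniteMeasure μ] :
    Measure.sum (fun x ↦ μ (X ⁻¹' {x}) • μ[|X ← x]) = μ := by
  ext E hE
  have hfibres : ⋃ x, X ⁻¹' {x} ∩ E = E := by ext; simp
  rw [Measure.sum_apply _ hE]
  simp only [Measure.coe_smul, Pi.smul_apply, smul_eq_mul]
  simp_rw [mul_comm (μ _), cond_mul_eq_inter (hX (.singleton _))]
  rw [← measure_iUnion _ fun x ↦ (hX (.singleton x)).inter hE, hfibres]
  exact fun x y hxy ↦ (pairwise_disjoint_fiber X hxy).mono inter_subset_left inter_subset_left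

lemma tsum_meas_mul_cond_fiber [Countable α] [MeasurableSingletonClass α]
    {X : Ω → α} (hX : Measurable X) (μ : Measure Ω) [IsFiniteMeasure μ] (s : Set Ω) :
    ∑' x, μ (X ⁻¹' {x}) * μ[s | X ← x] = μ s := by
  conv_rhs => rw [← sum_meas_smul_cond_fiber_of_countable hX μ]
  simp [Measure.sum_apply_of_countable]

lemma IndepFun.cond_preimage_eq {β : Type*} [MeasurableSpace β] [IsFiniteMeasure μ]
    {f : Ω → α} {g : Ω → β} (hfg : IndepFun f g μ) (hg : Measurable g) {s : Set α} {t : Set β}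
    (hs : MeasurableSet s) (ht : MeasurableSet t) (hμt : μ (g ⁻¹' t) ≠ 0) :
    μ[f ⁻¹' s | g ⁻¹' t] = μ (f ⁻¹' s) := by
  rw [cond_apply (hg ht), inter_comm, hfg.measure_inter_preimage_eq_mul s t hs ht, mul_comm,
    ENNReal.mul_inv_cancel_right hμt (measure_ne_top μ _)]

end ProbabilityTheory

theorem marginalize_frailty_general
    {Ω : Type*} [MeasurableSpace Ω] (P : Measure Ω) [IsProbabilityMeasure P]
    {γ0 γ1 : Type*} [MeasurableSpace γ0] [MeasurableSpace γ1]
    [Countable γ0]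
    [MeasurableSingletonClass γ0] [MeasurableSingletonClass γ1]
    (U0 : Ω → γ0) (U1 : Ω → γ1) (hU0 : Measurable U0) (hU1 : Measurable U1)
    (hindep : IndepFun U0 U1 P)
    (T0 Ta : Ω → ℝ)
    (t : ℝ) (c : ℝ)
    (u1 : γ1) (hu1 : 0 < P {ω | U1 ω = u1})
    (h1 : ∀ u0 : γ0, 0 < P {ω | U0 ω = u0 ∧ U1 ω = u1} →
      (P[|{ω | U0 ω = u0 ∧ U1 ω = u1}]) {ω | t < Ta ω}
        = (P[|{ω | U0 ω = u0}]) {ω | c * t < T0 ω}) :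
    (P[|{ω | U1 ω = u1}]) {ω | t < Ta ω} = P {ω | c * t < T0 ω} := by
  have hA : MeasurableSet (U1 ⁻¹' {u1}) := hU1 (measurableSet_singleton u1)
  have hfibre (u0 : γ0) : P[U0 ⁻¹' {u0} | U1 ⁻¹' {u1}] * P[|U1 ← u1][{ω | t < Ta ω} | U0 ← u0]
      = P (U0 ⁻¹' {u0}) * P[{ω | c * t < T0 ω} | U0 ← u0] := by
    rw [hindep.cond_preimage_eq hU1 (measurableSet_singleton u0) (measurableSet_singleton u1)
      hu1.ne', cond_cond_eq_cond_inter hA (hU0 (measurableSet_singleton u0)), inter_comm]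
    by_cases hB : P (U0 ⁻¹' {u0}) = 0
    · simp [hB]
    · have hBA : 0 < P {ω | U0 ω = u0 ∧ U1 ω = u1} := by
        change 0 < P (U0 ⁻¹' {u0} ∩ U1 ⁻¹' {u1})
        rw [hindep.measure_inter_preimage_eq_mul _ _ (measurableSet_singleton u0)
          (measurableSet_singleton u1)]
        exact ENNReal.mul_pos hB hu1.ne'
      exact congrArg _ (h1 u0 hBA)
  calc P[{ω | t < Ta ω} | U1 ← u1]
      = ∑' u0, P[U0 ⁻¹' {u0} | U1 ⁻¹' {u1}] * P[|U1 ← u1][{ω | t < Ta ω} | U0 ← u0] :=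
        (tsum_meas_mul_cond_fiber hU0 _ _).symm
    _ = ∑' u0, P (U0 ⁻¹' {u0}) * P[{ω | c * t < T0 ω} | U0 ← u0] := tsum_congr hfibre
    _ = P {ω | c * t < T0 ω} := tsum_meas_mul_cond_fiber hU0 _ _

/-- Marginalizing the frailty: if `U₀ ⫫ U₁` (countable-valued), and at heterogeneity level
`u₁` the conditional survival of `Tᵃ` at `t` equals that of `T⁰ | U₀ = u₀` at `c·t` for every
relevant `u₀` (with the conditional law of `T⁰` given `(U₀, U₁)` not depending on `U₁`), then
`P(Tᵃ > t | U₁ = u₁) = P(T⁰ > c·t)`. -/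
theorem marginalize_frailty
    {Ω : Type*} [MeasurableSpace Ω] (P : Measure Ω) [IsProbabilityMeasure P]
    {γ0 γ1 : Type*} [MeasurableSpace γ0] [MeasurableSpace γ1]
    [Countable γ0] [Countable γ1]
    [MeasurableSingletonClass γ0] [MeasurableSingletonClass γ1]
    (U0 : Ω → γ0) (U1 : Ω → γ1) (hU0 : Measurable U0) (hU1 : Measurable U1)
    (hindep : IndepFun U0 U1 P)
    (T0 Ta : Ω → ℝ) (hT0 : Measurable T0) (hTa : Measurable Ta)
    (hT0nn : ∀ ω, 0 ≤ T0 ω) (hTann : ∀ ω, 0 ≤ Ta ω)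
    (t : ℝ) (ht : 0 < t) (c : ℝ) (hc : 0 < c)
    (u1 : γ1) (hu1 : 0 < P {ω | U1 ω = u1})
    (h1 : ∀ u0 : γ0, 0 < P {ω | U0 ω = u0 ∧ U1 ω = u1} →
      (P[|{ω | U0 ω = u0 ∧ U1 ω = u1}]) {ω | t < Ta ω}
        = (P[|{ω | U0 ω = u0}]) {ω | c * t < T0 ω})
    (h2 : ∀ u0 : γ0, 0 < P {ω | U0 ω = u0 ∧ U1 ω = u1} →
      ∀ s : ℝ, 0 ≤ s →
        (P[|{ω | U0 ω = u0 ∧ U1 ω = u1}]) {ω | s < T0 ω}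
          = (P[|{ω | U0 ω = u0}]) {ω | s < T0 ω}) :
    (P[|{ω | U1 ω = u1}]) {ω | t < Ta ω} = P {ω | c * t < T0 ω} :=
  marginalize_frailty_general P U0 U1 hU0 hU1 hindep T0 Ta t c u1 hu1 h1
end

section
/- Let T^0 and T^a be strictly positive random variables such that S_{T^0}(t) = P(T^0 > t) is continuous and strictly decreasing with S_{T^0}(0) = 1, S_{T^0}(t) > 0 and S_{T^0}(t) → 0 as t → ∞, and assume S_{T^a}(t) > 0 for all t > 0. Define θ(t) = (1/t)·sup{s : S_{T^0}(s) ≥ S_{T^a}(t)}. If log T^0 and log T^a are integrable, then E[log T^a] − E[log T^0] = ∫_0^∞ log t dG(t) − ∫_0^∞ log t dF_{T^0}(t), where G is the cumulative distribution function t ↦ F_{T^0}(t·θ(t)) (which is the CDF of T^a) and the integrals are Lebesgue–Stieltjes integrals. -/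
/-!
For `t > 0` the set defining `t·θ(t)` is `{s ≥ 0 | S_{T⁰}(s) ≥ S_{Tᵃ}(t)}`. It is closed since
`S_{T⁰}` is continuous and bounded since `S_{T⁰} → 0`, so its supremum `s*` lies in it; and
`S_{T⁰}(s*) = S_{Tᵃ}(t)`, as otherwise `S_{T⁰}` would exceed `S_{Tᵃ}(t)` just right of `s*`.
Hence `G(t) = 1 - S_{T⁰}(s*) = 1 - S_{Tᵃ}(t) = F_{Tᵃ}(t)`: `G` and `F_{T⁰}` are the Stieltjes
functions of the laws of `Tᵃ` and `T⁰`, and both integrals are `E[log Tᵃ]` and `E[log T⁰]` by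
change of variables.
-/

open MeasureTheory ProbabilityTheory Filter Set Topology

noncomputable def survivalInv (S : ℝ → ℝ) (p : ℝ) : ℝ :=
  sSup {s : ℝ | 0 ≤ s ∧ p ≤ S s}

lemma apply_survivalInv_eq {S : ℝ → ℝ} (hcont : ContinuousOn S (Ici 0))
    (hlim : Tendsto S atTop (𝓝 0)) {p : ℝ} (hp : 0 < p) (hpS : p ≤ S 0) :
    S (survivalInv S p) = p := by
  set A := {s : ℝ | 0 ≤ s ∧ p ≤ S s}
  obtain ⟨M, hM⟩ := (hlim.eventually (gt_mem_nhds hp)).exists_forall_of_atTop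
  have hbdd : BddAbove A :=
    ⟨M, fun s ⟨_, hs⟩ => le_of_not_gt fun hMs => (hM s hMs.le).not_ge hs⟩
  have hclosed : IsClosed A := hcont.preimage_isClosed_of_isClosed isClosed_Ici isClosed_Ici
  have hmem : survivalInv S p ∈ A := hclosed.csSup_mem ⟨0, le_rfl, hpS⟩ hbdd
  refine le_antisymm ?_ hmem.2
  by_contra! hlt
  have hnear : ∀ᶠ s in 𝓝[>] survivalInv S p, p < S s :=
    ((hcont _ hmem.1).mono_left (nhdsWithin_mono _ fun s hs => hmem.1.trans hs.le)).eventually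
      (lt_mem_nhds hlt)
  obtain ⟨s, hps, hs⟩ := (hnear.and self_mem_nhdsWithin).exists
  exact (le_csSup hbdd ⟨hmem.1.trans hs.le, hps.le⟩).not_gt hs

section
variable {Ω : Type*} [MeasurableSpace Ω] {X : Ω → ℝ}

lemma measureReal_lt_eq_one_sub {P : Measure Ω} [IsProbabilityMeasure P] (hX : Measurable X)
    (t : ℝ) : (P {ω | t < X ω}).toReal = 1 - (P {ω | X ω ≤ t}).toReal := by
  have h := probReal_compl_eq_one_sub (μ := P) (hX (measurableSet_Iic : MeasurableSet (Iic t)))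
  rwa [← preimage_compl, compl_Iic] at h

lemma StieltjesFunction.measure_eq_map {P : Measure Ω} [IsProbabilityMeasure P]
    (hX : Measurable X) {F : StieltjesFunction ℝ}
    (hF : ∀ t, F t = (P {ω | X ω ≤ t}).toReal) : F.measure = P.map X := by
  have : IsProbabilityMeasure (P.map X) := Measure.isProbabilityMeasure_map hX.aemeasurable
  have hF_cdf : F = cdf (P.map X) := by
    ext t
    rw [cdf_eq_real, measureReal_def, Measure.map_apply hX measurableSet_Iic, hF]
    rfl
  rw [hF_cdf, measure_cdf]

lemma setIntegral_Ioi_zero_map_of_pos {μ : Measure Ω} (hX : Measurable X)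
    (hXpos : ∀ ω, 0 < X ω) {f : ℝ → ℝ} (hf : Measurable f) :
    ∫ x in Ioi 0, f x ∂(μ.map X) = ∫ ω, f (X ω) ∂μ := by
  rw [setIntegral_map measurableSet_Ioi hf.aestronglyMeasurable hX.aemeasurable,
    show X ⁻¹' Ioi 0 = univ from eq_univ_of_forall hXpos, Measure.restrict_univ]
end

theorem log_contrast_identification_general
    {Ω : Type*} [MeasurableSpace Ω] (P : Measure Ω) [IsProbabilityMeasure P]
    (T0 Ta : Ω → ℝ) (hT0 : Measurable T0) (hTa : Measurable Ta)
    (hT0pos : ∀ ω, 0 < T0 ω) (hTapos : ∀ ω, 0 < Ta ω)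
    (S0 Sa : ℝ → ℝ)
    (hS0 : ∀ t, S0 t = (P {ω | t < T0 ω}).toReal)
    (hSa : ∀ t, Sa t = (P {ω | t < Ta ω}).toReal)
    (hcont : ContinuousOn S0 (Ici 0))
    (hS00 : S0 0 = 1)
    (hlim : Tendsto S0 atTop (nhds 0))
    (hSapos : ∀ t, 0 < t → 0 < Sa t)
    (θ : ℝ → ℝ)
    (hθ : ∀ t, 0 < t → θ t = (1 / t) * sSup {s : ℝ | 0 ≤ s ∧ Sa t ≤ S0 s})
    (G F0 : StieltjesFunction ℝ)
    (hF0 : ∀ t, F0 t = (P {ω | T0 ω ≤ t}).toReal)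
    (hG : ∀ t, 0 < t → G t = F0 (t * θ t))
    (hGneg : ∀ t, t ≤ 0 → G t = 0) :
    (∀ t, G t = (P {ω | Ta ω ≤ t}).toReal) ∧
    (∫ ω, Real.log (Ta ω) ∂P) - (∫ ω, Real.log (T0 ω) ∂P)
      = (∫ x in Ioi (0 : ℝ), Real.log x ∂G.measure)
        - (∫ x in Ioi (0 : ℝ), Real.log x ∂F0.measure) := by
  have hG_cdf : ∀ t, G t = (P {ω | Ta ω ≤ t}).toReal := by
    intro t
    rcases le_or_gt t 0 with ht | ht
    · have hempty : {ω | Ta ω ≤ t} = ∅ :=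
        eq_empty_of_forall_notMem fun ω hω => (ht.trans_lt (hTapos ω)).not_ge hω
      rw [hGneg t ht, hempty, measure_empty, ENNReal.toReal_zero]
    · have hSa_le : Sa t ≤ S0 0 := hS00 ▸ hSa t ▸ measureReal_le_one
      have hθt : t * θ t = survivalInv S0 (Sa t) := by
        rw [hθ t ht, survivalInv]
        field_simp
      have hS0_inv := apply_survivalInv_eq hcont hlim (hSapos t ht) hSa_le
      set s := survivalInv S0 (Sa t)
      rw [hG t ht, hθt, hF0]
      linarith [measureReal_lt_eq_one_sub (P := P) hT0 s, hS0 s,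
        measureReal_lt_eq_one_sub (P := P) hTa t, hSa t]
  refine ⟨hG_cdf, ?_⟩
  rw [StieltjesFunction.measure_eq_map hTa hG_cdf, StieltjesFunction.measure_eq_map hT0 hF0,
    setIntegral_Ioi_zero_map_of_pos hTa hTapos Real.measurable_log,
    setIntegral_Ioi_zero_map_of_pos hT0 hT0pos Real.measurable_log]

/-- Equation (8) of Lemma 1 in the paper: with `θ(t) = (1/t)·S_{T⁰}⁻¹(S_{Tᵃ}(t))`, the contrast
of expected log survival times equals the difference of Lebesgue–Stieltjes integrals of `log`
with respect to `G(t) = F_{T⁰}(t·θ(t))` (which is the CDF of `Tᵃ`) and `F_{T⁰}`. -/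
theorem log_contrast_identification
    {Ω : Type*} [MeasurableSpace Ω] (P : Measure Ω) [IsProbabilityMeasure P]
    (T0 Ta : Ω → ℝ) (hT0 : Measurable T0) (hTa : Measurable Ta)
    (hT0pos : ∀ ω, 0 < T0 ω) (hTapos : ∀ ω, 0 < Ta ω)
    (S0 Sa : ℝ → ℝ)
    (hS0 : ∀ t, S0 t = (P {ω | t < T0 ω}).toReal)
    (hSa : ∀ t, Sa t = (P {ω | t < Ta ω}).toReal)
    (hcont : ContinuousOn S0 (Ici 0)) (hanti : StrictAntiOn S0 (Ici 0))
    (hS00 : S0 0 = 1) (hpos : ∀ t, 0 ≤ t → 0 < S0 t)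
    (hlim : Tendsto S0 atTop (nhds 0))
    (hSapos : ∀ t, 0 < t → 0 < Sa t)
    (θ : ℝ → ℝ)
    (hθ : ∀ t, 0 < t → θ t = (1 / t) * sSup {s : ℝ | 0 ≤ s ∧ Sa t ≤ S0 s})
    (hint0 : Integrable (fun ω => Real.log (T0 ω)) P)
    (hinta : Integrable (fun ω => Real.log (Ta ω)) P)
    (G F0 : StieltjesFunction ℝ)
    (hF0 : ∀ t, F0 t = (P {ω | T0 ω ≤ t}).toReal)
    (hG : ∀ t, 0 < t → G t = F0 (t * θ t))
    (hGneg : ∀ t, t ≤ 0 → G t = 0) :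
    (∀ t, G t = (P {ω | Ta ω ≤ t}).toReal) ∧
    (∫ ω, Real.log (Ta ω) ∂P) - (∫ ω, Real.log (T0 ω) ∂P)
      = (∫ x in Ioi (0 : ℝ), Real.log x ∂G.measure)
        - (∫ x in Ioi (0 : ℝ), Real.log x ∂F0.measure) :=
  log_contrast_identification_general P T0 Ta hT0 hTa hT0pos hTapos S0 Sa hS0 hSa hcont hS00 hlim
    hSapos θ hθ G F0 hF0 hG hGneg
end

section
/- Let (Ω, ℱ, P) carry a treatment A with levels 0 and a, a covariate L taking values in a countable set, nonnegative potential outcomes T^0, T^a, and a factual outcome T with T = T^a on {A = a} and T = T^0 on {A = 0} (consistency). Assume that for every ℓ in the support of L, P(L = ℓ, A = a) > 0, P(L = ℓ, A = 0) > 0, and conditional exchangeability holds: P(T^b > t | L = ℓ, A = b) = P(T^b > t | L = ℓ) for all t ≥ 0 and b ∈ {0, a}. Define the adjusted survival functions S_{b,adj}(t) := Σ_ℓ P(T > t | L = ℓ, A = b)·P(L = ℓ). Then S_{b,adj}(t) = P(T^b > t) for all t ≥ 0 and b ∈ {0, a}; consequently the adjusted acceleration factor θ_adj(t) = (1/t)·sup{s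 : S_{0,adj}(s) ≥ S_{a,adj}(t)} equals the causal acceleration factor θ(t) = (1/t)·sup{s : P(T^0 > s) ≥ P(T^a > t)} for all t > 0. -/
open MeasureTheory ProbabilityTheory Set

/-!
Standardization is the law of total probability over the strata of `L`. In each stratum,
consistency replaces the factual outcome by the potential outcome `T^b` on `{A = b}`, and
exchangeability removes the conditioning on `A = b`; multiplying by `P(L = ℓ)` and summing over `ℓ`
leaves `P(T^b > t)`. Since the adjusted survival curves coincide with the potential-outcome ones,
so do the generalized inverses built from them.
-/

section Standardization

variable {Ω γ : Type*} [MeasurableSpace Ω] [MeasurableSpace γ] [Countable γ]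
  [MeasurableSingletonClass γ] {μ : Measure Ω} {L : Ω → γ}

theorem tsum_measure_preimage_singleton_inter (hL : Measurable L) (E : Set Ω) :
    ∑' ℓ, μ (L ⁻¹' {ℓ} ∩ E) = μ E := by
  simp_rw [← Measure.restrict_apply (hL (measurableSet_singleton _))]
  rw [← measure_iUnion (pairwise_disjoint_fiber L) fun ℓ => hL (measurableSet_singleton ℓ),
    ← preimage_iUnion, iUnion_of_singleton, preimage_univ, Measure.restrict_apply_univ]

/-- The g-formula for events: `C` is the treatment arm, `E` the factual event and `F` the
potential-outcome event. -/
theorem tsum_cond_inter_mul_eq_of_exchangeable [IsFiniteMeasure μ] (hL : Measurable L)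
    {C E F : Set Ω} (hC : MeasurableSet C) (hcons : C ∩ E = C ∩ F)
    (hexch : ∀ ℓ, 0 < μ (L ⁻¹' {ℓ}) → μ[F | L ⁻¹' {ℓ} ∩ C] = μ[F | L ⁻¹' {ℓ}]) :
    ∑' ℓ, μ[E | L ⁻¹' {ℓ} ∩ C] * μ (L ⁻¹' {ℓ}) = μ F := by
  have hfiber : ∀ ℓ, MeasurableSet (L ⁻¹' {ℓ}) := fun ℓ => hL (measurableSet_singleton ℓ)
  have hstratum : ∀ ℓ, μ[E | L ⁻¹' {ℓ} ∩ C] * μ (L ⁻¹' {ℓ}) = μ (L ⁻¹' {ℓ} ∩ F) := by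
    intro ℓ
    rcases eq_zero_or_pos (μ (L ⁻¹' {ℓ})) with hnull | hpos
    · rw [hnull, mul_zero, measure_inter_null_of_null_left _ hnull]
    have hconsistent : μ[E | L ⁻¹' {ℓ} ∩ C] = μ[F | L ⁻¹' {ℓ} ∩ C] := by
      rw [cond_apply ((hfiber ℓ).inter hC), cond_apply ((hfiber ℓ).inter hC), inter_assoc,
        hcons, ← inter_assoc]
    rw [hconsistent, hexch ℓ hpos, cond_mul_eq_inter (hfiber ℓ)]
  simp_rw [hstratum]
  exact tsum_measure_preimage_singleton_inter hL F

end Standardization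

theorem standardized_acceleration_factor_general
    {Ω : Type*} [MeasurableSpace Ω] (P : Measure Ω) [IsProbabilityMeasure P]
    {γ : Type*} [MeasurableSpace γ] [Countable γ] [MeasurableSingletonClass γ]
    (A T T0 Ta : Ω → ℝ) (L : Ω → γ) (a : ℝ)
    (hA : Measurable A)
    (hL : Measurable L)
    (hconsa : ∀ ω, A ω = a → T ω = Ta ω)
    (hcons0 : ∀ ω, A ω = 0 → T ω = T0 ω)
    (hsupp : ∀ ℓ : γ, 0 < P {ω | L ω = ℓ} →
      0 < P {ω | L ω = ℓ ∧ A ω = a} ∧ 0 < P {ω | L ω = ℓ ∧ A ω = 0} ∧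
      (∀ t : ℝ, 0 ≤ t →
        (P[|{ω | L ω = ℓ ∧ A ω = a}]) {ω | t < Ta ω}
          = (P[|{ω | L ω = ℓ}]) {ω | t < Ta ω} ∧
        (P[|{ω | L ω = ℓ ∧ A ω = 0}]) {ω | t < T0 ω}
          = (P[|{ω | L ω = ℓ}]) {ω | t < T0 ω})) :
    (∀ t : ℝ, 0 ≤ t →
      (∑' ℓ : γ, (P[|{ω | L ω = ℓ ∧ A ω = a}]) {ω | t < T ω} * P {ω | L ω = ℓ})
        = P {ω | t < Ta ω} ∧
      (∑' ℓ : γ, (P[|{ω | L ω = ℓ ∧ A ω = 0}]) {ω | t < T ω} * P {ω | L ω = ℓ})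
        = P {ω | t < T0 ω}) ∧
    (∀ t : ℝ, 0 < t →
      (1 / t) * sSup {s : ℝ | 0 ≤ s ∧
          (∑' ℓ : γ, (P[|{ω | L ω = ℓ ∧ A ω = a}]) {ω | t < T ω} * P {ω | L ω = ℓ})
            ≤ ∑' ℓ : γ, (P[|{ω | L ω = ℓ ∧ A ω = 0}]) {ω | s < T ω} * P {ω | L ω = ℓ}}
        = (1 / t) * sSup {s : ℝ | 0 ≤ s ∧ P {ω | t < Ta ω} ≤ P {ω | s < T0 ω}}) := by
  have consistent {b : ℝ} {Tb : Ω → ℝ} (hcons : ∀ ω, A ω = b → T ω = Tb ω) (t : ℝ) :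
      {ω | A ω = b} ∩ {ω | t < T ω} = {ω | A ω = b} ∩ {ω | t < Tb ω} := by
    ext ω
    simp only [mem_inter_iff, mem_ofPred_eq, and_congr_right_iff]
    intro hω
    rw [hcons ω hω]
  have hsurv : ∀ t : ℝ, 0 ≤ t →
      (∑' ℓ : γ, (P[|{ω | L ω = ℓ ∧ A ω = a}]) {ω | t < T ω} * P {ω | L ω = ℓ})
        = P {ω | t < Ta ω} ∧
      (∑' ℓ : γ, (P[|{ω | L ω = ℓ ∧ A ω = 0}]) {ω | t < T ω} * P {ω | L ω = ℓ})
        = P {ω | t < T0 ω} := fun t ht =>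
    ⟨tsum_cond_inter_mul_eq_of_exchangeable hL (hA (measurableSet_singleton a))
        (consistent hconsa t) fun ℓ hℓ => ((hsupp ℓ hℓ).2.2 t ht).1,
      tsum_cond_inter_mul_eq_of_exchangeable hL (hA (measurableSet_singleton 0))
        (consistent hcons0 t) fun ℓ hℓ => ((hsupp ℓ hℓ).2.2 t ht).2⟩
  refine ⟨hsurv, fun t ht => ?_⟩
  congr 2
  ext s
  exact and_congr_right fun hs => by rw [(hsurv t ht.le).1, (hsurv s hs).2]

/-- Section 4 standardization claim: under consistency, positivity and conditional
exchangeability on the support of a countable measured covariate `L`, the adjusted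
(standardized) survival functions `S_{b,adj}(t) = Σ_ℓ P(T > t | L = ℓ, A = b)·P(L = ℓ)` equal
the potential-outcome survival functions, and consequently the adjusted acceleration factor
`θ_adj` equals the causal acceleration factor `θ`. -/
theorem standardized_acceleration_factor
    {Ω : Type*} [MeasurableSpace Ω] (P : Measure Ω) [IsProbabilityMeasure P]
    {γ : Type*} [MeasurableSpace γ] [Countable γ] [MeasurableSingletonClass γ]
    (A T T0 Ta : Ω → ℝ) (L : Ω → γ) (a : ℝ)
    (hA : Measurable A) (hT : Measurable T) (hT0 : Measurable T0) (hTa : Measurable Ta)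
    (hL : Measurable L)
    (hT0nn : ∀ ω, 0 ≤ T0 ω) (hTann : ∀ ω, 0 ≤ Ta ω)
    (hconsa : ∀ ω, A ω = a → T ω = Ta ω)
    (hcons0 : ∀ ω, A ω = 0 → T ω = T0 ω)
    (hsupp : ∀ ℓ : γ, 0 < P {ω | L ω = ℓ} →
      0 < P {ω | L ω = ℓ ∧ A ω = a} ∧ 0 < P {ω | L ω = ℓ ∧ A ω = 0} ∧
      (∀ t : ℝ, 0 ≤ t →
        (P[|{ω | L ω = ℓ ∧ A ω = a}]) {ω | t < Ta ω}
          = (P[|{ω | L ω = ℓ}]) {ω | t < Ta ω} ∧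
        (P[|{ω | L ω = ℓ ∧ A ω = 0}]) {ω | t < T0 ω}
          = (P[|{ω | L ω = ℓ}]) {ω | t < T0 ω})) :
    (∀ t : ℝ, 0 ≤ t →
      (∑' ℓ : γ, (P[|{ω | L ω = ℓ ∧ A ω = a}]) {ω | t < T ω} * P {ω | L ω = ℓ})
        = P {ω | t < Ta ω} ∧
      (∑' ℓ : γ, (P[|{ω | L ω = ℓ ∧ A ω = 0}]) {ω | t < T ω} * P {ω | L ω = ℓ})
        = P {ω | t < T0 ω}) ∧
    (∀ t : ℝ, 0 < t →
      (1 / t) * sSup {s : ℝ | 0 ≤ s ∧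
          (∑' ℓ : γ, (P[|{ω | L ω = ℓ ∧ A ω = a}]) {ω | t < T ω} * P {ω | L ω = ℓ})
            ≤ ∑' ℓ : γ, (P[|{ω | L ω = ℓ ∧ A ω = 0}]) {ω | s < T ω} * P {ω | L ω = ℓ}}
        = (1 / t) * sSup {s : ℝ | 0 ≤ s ∧ P {ω | t < Ta ω} ≤ P {ω | s < T0 ω}}) :=
  standardized_acceleration_factor_general P A T T0 Ta L a hA hL hconsa hcons0 hsupp
end
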